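/- arXiv:1905.06779 — 4 statements merged into one kernel-verified Lean document; each statement's English description precedes it below -/
import Mathlib

section
/- Let α ∈ ℂ with 0 < Re α < 1, ω ∈ [0, π/2), z ∈ S_{π/2−ω} and δ ∈ (0, π/2 − ω − |arg z|). Then, as λ → 0 in S_{ω+δ}, one has the expansion u_z(λ) = 1 − (Γ(1−α)/(2^{2α} Γ(1+α))) (λz)^{2α} + O((λz)^2); in particular u_z(λ) − 1 = O(λ^{2α}), i.e. u_z has polynomial limit 1 at the origin. -/
open Complex Filter Set MeasureTheory

/-- The open sector `S_θ = {ζ ∈ ℂ \ (-∞,0] : |arg ζ| < θ}` for `θ ∈ (0,π)`,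
with the convention `S_0 = (0,∞)`. -/
noncomputable def sector (θ : ℝ) : Set ℂ :=
  if θ = 0 then {ζ : ℂ | 0 < ζ.re ∧ ζ.im = 0}
  else {ζ : ℂ | ζ ≠ 0 ∧ |ζ.arg| < θ}

/-- Modified Bessel function of the first kind, `I_β`. -/
noncomputable def besselI (β ζ : ℂ) : ℂ :=
  (ζ / 2) ^ β * ∑' k : ℕ, ζ ^ (2 * k) / ((4 : ℂ) ^ k * (k.factorial : ℂ) * Complex.Gamma (β + (k : ℂ) + 1))

/-- Modified Bessel function of the second kind, `K_β` (for `Re β ∉ ℤ`). -/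
noncomputable def besselK (β ζ : ℂ) : ℂ :=
  ((Real.pi : ℂ) / (2 * Complex.sin (β * (Real.pi : ℂ)))) * (besselI (-β) ζ - besselI β ζ)

/-- The function `u_z(λ) = (λz)^α K_α(λz) / (2^(α-1) Γ(α))`. -/
noncomputable def uFun (α z l : ℂ) : ℂ :=
  (l * z) ^ α * besselK α (l * z) / ((2 : ℂ) ^ (α - 1) * Complex.Gamma α)

/-- The function `v_z(λ) = (Γ(1-α)/2^α) (λz)^α I_{-α}(λz)`. -/
noncomputable def vFun (α z l : ℂ) : ℂ :=
  (Complex.Gamma (1 - α) / (2 : ℂ) ^ α) * ((l * z) ^ α * besselI (-α) (l * z))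

/-- The function `w_z(λ) = (Γ(α)/2^(1-α)) (λ⁻¹ z)^α I_α(λz)`. -/
noncomputable def wFun (α z l : ℂ) : ℂ :=
  (Complex.Gamma α / (2 : ℂ) ^ (1 - α)) * ((l⁻¹ * z) ^ α * besselI α (l * z))

/-!
Write `ζ = λz` and `I_β(ζ) = (ζ/2)^β S_β(ζ²)` with the entire series
`S_β(w) = ∑ w^k / (4^k k! Γ(β+k+1))`, so `S_β(0) = 1/Γ(β+1)` and `S_β(w) - S_β(0) = O(w)`.
The reflection formula `π / sin(απ) = Γ(α)Γ(1-α)` turns the definition of `K_α` into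
`u = Γ(1-α) S_{-α}(ζ²) - Γ(1-α) 2^{-2α} ζ^{2α} S_α(ζ²)`.
As `ζ^{2α}` is bounded near `0`, this gives the expansion with remainder `O(ζ²)`,
and `ζ² = O(ζ^{2α})` because `Re 2α ≤ 2`.
-/

open Asymptotics Topology
open scoped Nat

lemma zero_notMem_sector (θ : ℝ) : (0 : ℂ) ∉ sector θ := by
  unfold sector
  split_ifs <;> simp

lemma div_ofReal_cpow {r : ℝ} (hr : 0 < r) (ζ c : ℂ) :
    (ζ / r) ^ c = ζ ^ c / (r : ℂ) ^ c := by
  rcases eq_or_ne ζ 0 with rfl | hζ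
  · rcases eq_or_ne c 0 with rfl | hc
    · simp
    · simp [zero_cpow hc]
  have hr' : (r : ℂ) ≠ 0 := ofReal_ne_zero.mpr hr.ne'
  rw [cpow_def_of_ne_zero (div_ne_zero hζ hr'), cpow_def_of_ne_zero hζ, cpow_def_of_ne_zero hr',
    div_eq_mul_inv, ← ofReal_inv, log_mul_ofReal _ (inv_pos.mpr hr) _ hζ, Real.log_inv,
    ofReal_neg, ofReal_log hr.le, ← exp_sub]
  ring_nf

noncomputable def besselCoeff (β : ℂ) (k : ℕ) : ℂ :=
  ((4 : ℂ) ^ k * k ! * Gamma (β + k + 1))⁻¹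

noncomputable def besselSeries (β w : ℂ) : ℂ :=
  ∑' k, besselCoeff β k * w ^ k

lemma besselI_eq_cpow_mul_besselSeries (β ζ : ℂ) :
    besselI β ζ = (ζ / 2) ^ β * besselSeries β (ζ ^ 2) := by
  simp only [besselI, besselSeries, besselCoeff, ← pow_mul, div_eq_inv_mul]

lemma besselCoeff_succ {β : ℂ} {k : ℕ} (h : β + k + 1 ≠ 0) :
    besselCoeff β (k + 1) = besselCoeff β k / (4 * (k + 1) * (β + k + 1)) := by
  rw [besselCoeff, besselCoeff, Nat.factorial_succ, Nat.cast_mul,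
    show β + (k + 1 : ℕ) + 1 = (β + k + 1) + 1 by push_cast; ring, Gamma_add_one _ h]
  push_cast
  field_simp
  ring

lemma summable_norm_besselCoeff (β : ℂ) : Summable fun k => ‖besselCoeff β k‖ := by
  refine summable_of_ratio_norm_eventually_le (r := 4⁻¹) (by norm_num) ?_
  filter_upwards [eventually_ge_atTop ⌈‖β‖⌉₊] with k hk
  have hβk : 1 ≤ ‖β + k + 1‖ := by
    calc 1 ≤ (k + 1 : ℝ) - ‖β‖ := by linarith [Nat.ceil_le.mp hk]
      _ = ‖((k + 1 : ℕ) : ℂ)‖ - ‖-β‖ := by rw [norm_neg, norm_natCast]; push_cast; ring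
      _ ≤ ‖((k + 1 : ℕ) : ℂ) - -β‖ := norm_sub_norm_le _ _
      _ = ‖β + k + 1‖ := by push_cast; ring_nf
  rw [norm_norm, norm_norm, besselCoeff_succ (norm_pos_iff.mp (one_pos.trans_le hβk)),
    norm_div]
  have hden : 4 ≤ ‖(4 : ℂ) * (k + 1) * (β + k + 1)‖ := by
    have hk1 : ‖(k : ℂ) + 1‖ = k + 1 := by norm_cast
    rw [norm_mul, norm_mul, hk1, RCLike.norm_ofNat]
    nlinarith
  calc ‖besselCoeff β k‖ / ‖(4 : ℂ) * (k + 1) * (β + k + 1)‖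
      ≤ ‖besselCoeff β k‖ / 4 := div_le_div_of_nonneg_left (norm_nonneg _) (by norm_num) hden
    _ = 4⁻¹ * ‖besselCoeff β k‖ := by ring

lemma isBigO_tsum_mul_pow_sub_coeff_zero {𝕜 : Type*} [NormedField 𝕜] [CompleteSpace 𝕜]
    {a : ℕ → 𝕜} (ha : Summable fun k => ‖a k‖) :
    (fun w => ∑' k, a k * w ^ k - a 0) =O[𝓝 0] id := by
  refine IsBigO.of_bound (∑' k, ‖a (k + 1)‖) ?_
  filter_upwards [Metric.closedBall_mem_nhds (0 : 𝕜) one_pos] with w hw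
  rw [mem_closedBall_zero_iff] at hw
  have hterm : ∀ k n, ‖a k * w ^ n‖ ≤ ‖a k‖ := fun k n => by
    rw [norm_mul, norm_pow]
    exact mul_le_of_le_one_right (norm_nonneg _) (pow_le_one₀ (norm_nonneg _) hw)
  have htail : ‖∑' k, a (k + 1) * w ^ k‖ ≤ ∑' k, ‖a (k + 1)‖ :=
    tsum_of_norm_bounded ((summable_nat_add_iff 1).mpr ha).hasSum fun k => hterm (k + 1) k
  rw [(Summable.of_norm_bounded ha fun k => hterm k k).tsum_eq_zero_add, pow_zero, mul_one,
    add_sub_cancel_left, show (fun k => a (k + 1) * w ^ (k + 1)) = fun k => w * (a (k + 1) * w ^ k)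
      by ext; ring, tsum_mul_left, norm_mul, id, mul_comm]
  exact mul_le_mul_of_nonneg_right htail (norm_nonneg _)

lemma isBigO_besselSeries_sub (β : ℂ) :
    (fun w => besselSeries β w - (Gamma (β + 1))⁻¹) =O[𝓝 0] id := by
  have h0 : besselCoeff β 0 = (Gamma (β + 1))⁻¹ := by simp [besselCoeff]
  rw [← h0]
  exact isBigO_tsum_mul_pow_sub_coeff_zero (summable_norm_besselCoeff β)

lemma uFun_one_eq_besselSeries {α : ℂ} (hα : Gamma α ≠ 0) {ζ : ℂ} (hζ : ζ ≠ 0) :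
    uFun α 1 ζ = Gamma (1 - α) * besselSeries (-α) (ζ ^ 2)
      - Gamma (1 - α) / 2 ^ (2 * α) * ζ ^ (2 * α) * besselSeries α (ζ ^ 2) := by
  have hreflection :
      (Real.pi : ℂ) / (2 * sin (α * Real.pi)) = Gamma α * Gamma (1 - α) / 2 := by
    rw [Gamma_mul_Gamma_one_sub, mul_comm (Real.pi : ℂ) α]
    ring
  have hhalf (c : ℂ) : (ζ / 2) ^ c = ζ ^ c / 2 ^ c := by
    exact_mod_cast div_ofReal_cpow two_pos ζ c
  have hζα : ζ ^ α ≠ 0 := cpow_ne_zero_iff.mpr (Or.inl hζ)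
  have h2α : (2 : ℂ) ^ α ≠ 0 := cpow_ne_zero_iff.mpr (Or.inl two_ne_zero)
  rw [uFun, mul_one, besselK, hreflection, besselI_eq_cpow_mul_besselSeries,
    besselI_eq_cpow_mul_besselSeries, hhalf, hhalf, cpow_neg, cpow_neg,
    cpow_sub _ _ two_ne_zero, cpow_one, cpow_ofNat_mul, cpow_ofNat_mul]
  field_simp

lemma isBigO_cpow_one_nhds_zero {b : ℂ} (hb : 0 ≤ b.re) :
    (fun ζ : ℂ => ζ ^ b) =O[𝓝 0] fun _ => (1 : ℂ) := by
  refine (isBigO_cpow_rpow (f := id) (g := fun _ => b) isBoundedUnder_const).trans ?_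
  refine IsBigO.of_bound 1 ?_
  filter_upwards [Metric.closedBall_mem_nhds (0 : ℂ) one_pos] with ζ hζ
  rw [mem_closedBall_zero_iff] at hζ
  rw [norm_one, mul_one, Real.norm_of_nonneg (by positivity)]
  exact Real.rpow_le_one (norm_nonneg _) hζ hb

lemma isBigO_pow_cpow_nhdsNE {n : ℕ} {b : ℂ} (hb : b.re ≤ n) :
    (fun ζ : ℂ => ζ ^ n) =O[𝓝[≠] 0] fun ζ => ζ ^ b := by
  refine IsBigO.trans ?_ (isTheta_cpow_const_rpow fun _ _ => self_mem_nhdsWithin).symm.isBigO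
  refine IsBigO.of_bound 1 ?_
  filter_upwards [self_mem_nhdsWithin,
    nhdsWithin_le_nhds (Metric.closedBall_mem_nhds (0 : ℂ) one_pos)] with ζ hζ hζ1
  rw [mem_closedBall_zero_iff] at hζ1
  rw [one_mul, Real.norm_of_nonneg (by positivity), norm_pow, ← Real.rpow_natCast]
  exact Real.rpow_le_rpow_of_exponent_ge (norm_pos_iff.mpr hζ) hζ1 hb

lemma isBigO_mul_const_cpow_nhdsNE (z b : ℂ) :
    (fun l : ℂ => (l * z) ^ b) =O[𝓝[≠] 0] fun l => l ^ b := by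
  refine (isBigO_cpow_rpow (g := fun _ => b) isBoundedUnder_const).trans (IsBigO.trans ?_
    (isTheta_cpow_const_rpow fun _ _ => self_mem_nhdsWithin).symm.isBigO)
  refine IsBigO.of_bound (‖z‖ ^ b.re) (Eventually.of_forall fun l => ?_)
  rw [Real.norm_of_nonneg (by positivity), Real.norm_of_nonneg (by positivity), norm_mul,
    Real.mul_rpow (norm_nonneg _) (norm_nonneg _), mul_comm]

lemma isBigO_uFun_one_sub_expansion {α : ℂ} (hΓ : Gamma α ≠ 0) (hΓ' : Gamma (1 - α) ≠ 0)
    (hre : 0 ≤ α.re) :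
    (fun ζ => uFun α 1 ζ -
      (1 - Gamma (1 - α) / ((2 : ℂ) ^ (2 * α) * Gamma (1 + α)) * ζ ^ (2 * α)))
      =O[𝓝[≠] 0] fun ζ => ζ ^ 2 := by
  have hsq : Tendsto (fun ζ : ℂ => ζ ^ 2) (𝓝[≠] 0) (𝓝 0) :=
    ((continuous_pow 2).tendsto' 0 0 (zero_pow two_ne_zero)).mono_left nhdsWithin_le_nhds
  have hS (β : ℂ) : (fun ζ : ℂ => besselSeries β (ζ ^ 2) - (Gamma (β + 1))⁻¹)
      =O[𝓝[≠] 0] fun ζ => ζ ^ 2 :=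
    (isBigO_besselSeries_sub β).comp_tendsto hsq
  have hpow : (fun ζ : ℂ => ζ ^ (2 * α)) =O[𝓝[≠] 0] fun _ => (1 : ℂ) :=
    (isBigO_cpow_one_nhds_zero (by simpa using hre)).mono nhdsWithin_le_nhds
  have heq : (fun ζ => uFun α 1 ζ -
      (1 - Gamma (1 - α) / ((2 : ℂ) ^ (2 * α) * Gamma (1 + α)) * ζ ^ (2 * α)))
      =ᶠ[𝓝[≠] 0] fun ζ =>
        Gamma (1 - α) * (besselSeries (-α) (ζ ^ 2) - (Gamma (-α + 1))⁻¹)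
        - Gamma (1 - α) / 2 ^ (2 * α) * ζ ^ (2 * α) *
          (besselSeries α (ζ ^ 2) - (Gamma (α + 1))⁻¹) := by
    filter_upwards [self_mem_nhdsWithin] with ζ hζ
    rw [uFun_one_eq_besselSeries hΓ hζ, neg_add_eq_sub, add_comm α 1]
    field_simp
    ring
  refine heq.trans_isBigO (((hS (-α)).const_mul_left _).sub ?_)
  simpa only [one_mul] using (hpow.const_mul_left _).mul (hS α)

lemma isBigO_uFun_one_sub_one {α : ℂ} (hΓ : Gamma α ≠ 0) (hΓ' : Gamma (1 - α) ≠ 0)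
    (hre : 0 ≤ α.re) (hre' : α.re ≤ 1) :
    (fun ζ => uFun α 1 ζ - 1) =O[𝓝[≠] 0] fun ζ => ζ ^ (2 * α) := by
  have h2 : (fun ζ : ℂ => ζ ^ 2) =O[𝓝[≠] 0] fun ζ => ζ ^ (2 * α) :=
    isBigO_pow_cpow_nhdsNE (by simpa using hre')
  have hc := (isBigO_refl (fun ζ : ℂ => ζ ^ (2 * α)) (𝓝[≠] 0)).const_mul_left
    (Gamma (1 - α) / ((2 : ℂ) ^ (2 * α) * Gamma (1 + α)))
  exact (((isBigO_uFun_one_sub_expansion hΓ hΓ' hre).trans h2).sub hc).congr_left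
    fun ζ => by ring

lemma uFun_one_mul (α z l : ℂ) : uFun α 1 (l * z) = uFun α z l := by
  simp [uFun]

theorem stmt1_general (α : ℂ) (hα1 : 0 < α.re) (hα2 : α.re < 1)
    (ω : ℝ) (z : ℂ) (hz : z ∈ sector (Real.pi / 2 - ω)) (δ : ℝ) :
    Asymptotics.IsBigO (nhdsWithin 0 (sector (ω + δ)))
      (fun l : ℂ => uFun α z l -
        (1 - Complex.Gamma (1 - α) / ((2 : ℂ) ^ (2 * α) * Complex.Gamma (1 + α)) * (l * z) ^ (2 * α)))
      (fun l : ℂ => (l * z) ^ (2 : ℕ)) ∧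
    Asymptotics.IsBigO (nhdsWithin 0 (sector (ω + δ)))
      (fun l : ℂ => uFun α z l - 1) (fun l : ℂ => l ^ (2 * α)) := by
  have hz0 : z ≠ 0 := fun h => zero_notMem_sector _ (h ▸ hz)
  have hsector : 𝓝[sector (ω + δ)] (0 : ℂ) ≤ 𝓝[≠] 0 :=
    nhdsWithin_mono _ (subset_compl_singleton_iff.mpr (zero_notMem_sector _))
  have hlz : Tendsto (fun l => l * z) (𝓝[≠] 0) (𝓝[≠] 0) :=
    tendsto_nhdsWithin_iff.mpr ⟨((continuous_mul_const z).tendsto' 0 0 (zero_mul z)).mono_left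
      nhdsWithin_le_nhds, eventually_nhdsWithin_of_forall fun l hl => mul_ne_zero hl hz0⟩
  have hα : Gamma α ≠ 0 := Gamma_ne_zero_of_re_pos hα1
  have hα' : Gamma (1 - α) ≠ 0 := Gamma_ne_zero_of_re_pos (by simpa using hα2)
  constructor
  · simpa only [Function.comp_def, uFun_one_mul] using
      ((isBigO_uFun_one_sub_expansion hα hα' hα1.le).comp_tendsto hlz).mono hsector
  · simpa only [Function.comp_def, uFun_one_mul] using
      (((isBigO_uFun_one_sub_one hα hα' hα1.le hα2.le).comp_tendsto hlz).trans
        (isBigO_mul_const_cpow_nhdsNE z _)).mono hsector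

theorem stmt1 (α : ℂ) (hα1 : 0 < α.re) (hα2 : α.re < 1)
    (ω : ℝ) (hω : ω ∈ Set.Ico 0 (Real.pi / 2))
    (z : ℂ) (hz : z ∈ sector (Real.pi / 2 - ω))
    (δ : ℝ) (hδ : δ ∈ Set.Ioo 0 (Real.pi / 2 - ω - |z.arg|)) :
    Asymptotics.IsBigO (nhdsWithin 0 (sector (ω + δ)))
      (fun l : ℂ => uFun α z l -
        (1 - Complex.Gamma (1 - α) / ((2 : ℂ) ^ (2 * α) * Complex.Gamma (1 + α)) * (l * z) ^ (2 * α)))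
      (fun l : ℂ => (l * z) ^ (2 : ℕ)) ∧
    Asymptotics.IsBigO (nhdsWithin 0 (sector (ω + δ)))
      (fun l : ℂ => uFun α z l - 1) (fun l : ℂ => l ^ (2 * α)) :=
  stmt1_general α hα1 hα2 ω z hz δ
end

section
/- Let α ∈ ℂ with 0 < Re α < 1, ω ∈ [0, π/2) and λ ∈ S_ω. Then for all z ∈ S_{π/2−ω} one has the identity −z^{1−2α} (d/dz) u_{z,α}(λ) = c_α λ^{2α} u_{z,α−1}(λ), where c_α = Γ(1−α)/(2^{2α−1} Γ(α)); consequently −z^{1−2α} (d/dz) u_{z,α}(λ) → c_α λ^{2α} as z → 0 with z ∈ S_{π/2−ω}. -/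
/-! Write `I_β(ζ) = (ζ/2)^β G_β(ζ²)` with the entire function
`G_β(t) = ∑ t^k / (4^k k! Γ(β+k+1))`. Termwise, `G_β' = G_{β+1}/4` and
`G_{β-1}(t) = β G_β(t) + (t/4) G_{β+1}(t)`; these give the classical rules
`(ζ^ν I_ν)' = ζ^ν I_{ν-1}` and `(ζ^{-ν} I_ν)' = ζ^{-ν} I_{ν+1}`, hence
`(ζ^α K_α)' = -ζ^α K_{α-1} = -ζ^α K_{1-α}`. For `U_β(ζ) = ζ^β K_β(ζ) / (2^{β-1} Γ(β))` this reads
`U_α' = -c_α ζ^{2α-1} U_{1-α}`. Since `u_{z,α}(λ) = U_α(λz)` and `u_{z,α-1}(λ) = U_{1-α}(λz)`, and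
`(λz)^s = λ^s z^s` for `λ ∈ S_ω`, `z ∈ S_{π/2-ω}` (then `|arg λ + arg z| < π/2`), the identity
follows by the chain rule. For the limit, `U_β(ζ) → 1` as `ζ → 0` when `0 < Re β`: only the `I_{-β}` part of `K_β`
survives, and its value at `0` is computed with Euler's reflection formula. -/

open Complex Filter Set MeasureTheory

/-- The two-branch family `u_{z,β}` for `-1 < Re β < 1`, `Re β ≠ 0`. -/
noncomputable def uGen (β z l : ℂ) : ℂ :=
  if 0 < β.re then (l * z) ^ β * besselK β (l * z) / ((2 : ℂ) ^ (β - 1) * Complex.Gamma β)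
  else (l * z) ^ (-β) * besselK (-β) (l * z) / ((2 : ℂ) ^ (-β - 1) * Complex.Gamma (-β))

/-- The constant `c_α = Γ(1-α)/(2^(2α-1) Γ(α))`. -/
noncomputable def cConst (α : ℂ) : ℂ :=
  Complex.Gamma (1 - α) / ((2 : ℂ) ^ (2 * α - 1) * Complex.Gamma α)

open scoped Real Topology

-- Mathlib's `Gamma` vanishes at its poles, so `(Gamma s)⁻¹` is the entire reciprocal Gamma
-- function and the identities for these coefficients hold for every `β`.
noncomputable def besselGCoeff (β : ℂ) (k : ℕ) : ℂ :=
  ((4 : ℂ) ^ k * (k.factorial : ℂ) * Gamma (β + k + 1))⁻¹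

noncomputable def besselG (β t : ℂ) : ℂ := ∑' k : ℕ, t ^ k * besselGCoeff β k

lemma besselGCoeff_eq_mul_succ (β : ℂ) (k : ℕ) :
    besselGCoeff β k = 4 * (k + 1) * (β + k + 1) * besselGCoeff β (k + 1) := by
  simp only [besselGCoeff, mul_inv, Nat.factorial_succ, pow_succ, Nat.cast_mul, Nat.cast_succ]
  rw [show β + (k + 1) + 1 = β + k + 1 + 1 by ring,
    one_div_Gamma_eq_self_mul_one_div_Gamma_add_one (β + k + 1)]
  have : (k + 1 : ℂ) ≠ 0 := Nat.cast_add_one_ne_zero k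
  field_simp

lemma succ_mul_besselGCoeff_succ (β : ℂ) (k : ℕ) :
    (k + 1) * besselGCoeff β (k + 1) = besselGCoeff (β + 1) k / 4 := by
  simp only [besselGCoeff, mul_inv, Nat.factorial_succ, pow_succ, Nat.cast_mul, Nat.cast_succ]
  have : (k + 1 : ℂ) ≠ 0 := Nat.cast_add_one_ne_zero k
  rw [show β + (k + 1) + 1 = β + 1 + k + 1 by ring]
  field_simp

lemma besselGCoeff_sub_one (β : ℂ) (k : ℕ) :
    besselGCoeff (β - 1) k = (β + k) * besselGCoeff β k := by
  simp only [besselGCoeff, mul_inv]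
  rw [show β - 1 + k + 1 = β + k by ring, one_div_Gamma_eq_self_mul_one_div_Gamma_add_one (β + k)]
  ring

lemma summable_succ_mul_norm_besselGCoeff_mul_pow (β : ℂ) {r : ℝ} (hr : 0 ≤ r) :
    Summable fun k : ℕ => (k + 1) * ‖besselGCoeff β k‖ * r ^ k := by
  refine summable_of_ratio_norm_eventually_le (r := 1 / 2) (by norm_num) ?_
  filter_upwards [eventually_ge_atTop ⌈‖β‖ + r⌉₊] with k hk
  have hk' : ‖β‖ + r ≤ k := Nat.ceil_le.mp hk
  have hβk : 1 ≤ ‖β + k + 1‖ := by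
    have := norm_sub_le (β + k + 1) β
    rw [show β + k + 1 - β = ((k + 1 : ℕ) : ℂ) by push_cast; ring, Complex.norm_natCast] at this
    push_cast at this
    linarith [norm_nonneg β]
  have hratio : (k + 2) * r ≤ 2 * (k + 1) ^ 2 * ‖β + k + 1‖ := by
    nlinarith [norm_nonneg β]
  have hnorm : ‖besselGCoeff β k‖ = 4 * (k + 1) * ‖β + k + 1‖ * ‖besselGCoeff β (k + 1)‖ := by
    rw [besselGCoeff_eq_mul_succ, norm_mul, norm_mul, norm_mul,
      show ((k : ℂ) + 1) = ((k + 1 : ℕ) : ℂ) by push_cast; ring, Complex.norm_natCast]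
    push_cast
    norm_num
  rw [Real.norm_of_nonneg (by positivity), Real.norm_of_nonneg (by positivity), hnorm, pow_succ]
  push_cast
  have := mul_le_mul_of_nonneg_right hratio
    (by positivity : (0 : ℝ) ≤ ‖besselGCoeff β (k + 1)‖ * r ^ k)
  nlinarith

lemma summable_pow_mul_besselGCoeff (β t : ℂ) : Summable fun k : ℕ => t ^ k * besselGCoeff β k :=
  .of_norm_bounded (summable_succ_mul_norm_besselGCoeff_mul_pow β (norm_nonneg t)) fun k => by
    rw [norm_mul, norm_pow]
    nlinarith [(by positivity : 0 ≤ ‖t‖ ^ k * ‖besselGCoeff β k‖), (k.cast_nonneg : (0 : ℝ) ≤ k)]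

lemma norm_natCast_mul_pow_sub_one_mul_besselGCoeff_le (β : ℂ) (k : ℕ) {y : ℂ} {R : ℝ}
    (hy : ‖y‖ ≤ R) (hR : 1 ≤ R) :
    ‖k * y ^ (k - 1) * besselGCoeff β k‖ ≤ (k + 1) * ‖besselGCoeff β k‖ * R ^ k := by
  have hpow : ‖y‖ ^ (k - 1) ≤ R ^ k :=
    (pow_le_pow_left₀ (norm_nonneg y) hy _).trans (pow_le_pow_right₀ hR (Nat.sub_le k 1))
  rw [norm_mul, norm_mul, norm_pow, Complex.norm_natCast]
  have : (k : ℝ) * ‖y‖ ^ (k - 1) ≤ (k + 1) * R ^ k :=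
    mul_le_mul (by linarith) hpow (by positivity) (by positivity)
  nlinarith [norm_nonneg (besselGCoeff β k)]

lemma summable_natCast_mul_pow_sub_one_mul_besselGCoeff (β t : ℂ) :
    Summable fun k : ℕ => k * t ^ (k - 1) * besselGCoeff β k :=
  .of_norm_bounded (summable_succ_mul_norm_besselGCoeff_mul_pow β (by positivity))
    fun k => norm_natCast_mul_pow_sub_one_mul_besselGCoeff_le β k
      (le_add_of_nonneg_right zero_le_one) (le_add_of_nonneg_left (norm_nonneg t))

lemma tsum_natCast_mul_pow_sub_one_mul_besselGCoeff (β t : ℂ) :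
    ∑' k : ℕ, k * t ^ (k - 1) * besselGCoeff β k = besselG (β + 1) t / 4 := by
  rw [(summable_natCast_mul_pow_sub_one_mul_besselGCoeff β t).tsum_eq_zero_add, besselG,
    ← tsum_div_const]
  simp only [CharP.cast_eq_zero, zero_mul, zero_add, Nat.cast_succ, add_tsub_cancel_right]
  refine tsum_congr fun k => ?_
  rw [mul_div_assoc, ← succ_mul_besselGCoeff_succ]
  ring

lemma hasDerivAt_besselG (β t : ℂ) : HasDerivAt (besselG β) (besselG (β + 1) t / 4) t := by
  set R := ‖t‖ + 1
  have hR : 1 ≤ R := by simp [R]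
  have ht : t ∈ Metric.ball (0 : ℂ) R := by simp [R]
  rw [← tsum_natCast_mul_pow_sub_one_mul_besselGCoeff]
  refine hasDerivAt_tsum_of_isPreconnected (g := fun k s => s ^ k * besselGCoeff β k)
    (g' := fun k s => k * s ^ (k - 1) * besselGCoeff β k)
    (summable_succ_mul_norm_besselGCoeff_mul_pow β (by positivity : 0 ≤ R)) Metric.isOpen_ball
    (convex_ball 0 R).isPreconnected (fun k y _ => (hasDerivAt_pow k y).mul_const _)
    (fun k y hy => ?_) ht (summable_pow_mul_besselGCoeff β t) ht
  exact norm_natCast_mul_pow_sub_one_mul_besselGCoeff_le β k (mem_ball_zero_iff.mp hy).le hR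

lemma continuous_besselG (β : ℂ) : Continuous (besselG β) :=
  continuous_iff_continuousAt.mpr fun t => (hasDerivAt_besselG β t).continuousAt

lemma besselG_sub_one (β t : ℂ) :
    besselG (β - 1) t = β * besselG β t + t / 4 * besselG (β + 1) t := by
  have hterm (k : ℕ) : t ^ k * besselGCoeff (β - 1) k
      = β * (t ^ k * besselGCoeff β k) + t * (k * t ^ (k - 1) * besselGCoeff β k) := by
    rw [besselGCoeff_sub_one]
    cases k with
    | zero => simp
    | succ k => simp only [Nat.cast_succ, add_tsub_cancel_right, pow_succ]; ring
  rw [besselG, tsum_congr hterm, ((summable_pow_mul_besselGCoeff β t).mul_left β).tsum_add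
    ((summable_natCast_mul_pow_sub_one_mul_besselGCoeff β t).mul_left t), tsum_mul_left,
    tsum_mul_left, tsum_natCast_mul_pow_sub_one_mul_besselGCoeff, ← besselG]
  ring

lemma besselG_zero (β : ℂ) : besselG β 0 = (Gamma (β + 1))⁻¹ := by
  rw [besselG, tsum_eq_single 0 fun k hk => by rw [zero_pow hk, zero_mul]]
  simp [besselGCoeff]

lemma besselI_eq_besselG (β ζ : ℂ) : besselI β ζ = (ζ / 2) ^ β * besselG β (ζ ^ 2) := by
  simp only [besselI, besselG, besselGCoeff, ← pow_mul, div_eq_mul_inv]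

lemma div_two_cpow (ζ c : ℂ) : (ζ / 2) ^ c = ζ ^ c / 2 ^ c := by
  rcases eq_or_ne ζ 0 with rfl | hζ
  · rcases eq_or_ne c 0 with rfl | hc <;> simp [*]
  have h2 : (2 : ℂ) ^ c ≠ 0 := by simp [cpow_eq_zero_iff]
  have hlog := log_mul_ofReal 2 two_pos (ζ / 2) (div_ne_zero hζ two_ne_zero)
  push_cast at hlog
  rw [div_mul_cancel₀ ζ two_ne_zero] at hlog
  rw [eq_div_iff h2, cpow_def_of_ne_zero (div_ne_zero hζ two_ne_zero), cpow_def_of_ne_zero hζ,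
    cpow_def_of_ne_zero two_ne_zero, ← exp_add, hlog, ← ofReal_ofNat, ← ofReal_log zero_le_two]
  ring_nf

lemma cpow_mul_besselI_eq {ζ : ℂ} (hζ : ζ ≠ 0) (ν : ℂ) :
    ζ ^ ν * besselI ν ζ = ζ ^ (2 * ν) * besselG ν (ζ ^ 2) / 2 ^ ν := by
  rw [besselI_eq_besselG, div_two_cpow, two_mul, cpow_add _ _ hζ]
  ring

lemma cpow_neg_mul_besselI_eq {ζ : ℂ} (hζ : ζ ≠ 0) (ν : ℂ) :
    ζ ^ (-ν) * besselI ν ζ = besselG ν (ζ ^ 2) / 2 ^ ν := by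
  have : ζ ^ ν ≠ 0 := by simp [cpow_eq_zero_iff, hζ]
  rw [besselI_eq_besselG, div_two_cpow, cpow_neg]
  field_simp

lemma hasDerivAt_cpow_neg_mul_besselI {ζ : ℂ} (hζ : ζ ≠ 0) (ν : ℂ) :
    HasDerivAt (fun ζ => ζ ^ (-ν) * besselI ν ζ) (ζ ^ (-ν) * besselI (ν + 1) ζ) ζ := by
  have hG := ((hasDerivAt_besselG ν (ζ ^ 2)).comp ζ (hasDerivAt_pow 2 ζ)).div_const (2 ^ ν)
  have hpow : ζ ^ (-ν) * ζ ^ (ν + 1) = ζ := by rw [← cpow_add _ _ hζ, neg_add_cancel_left, cpow_one]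
  refine (hG.congr_of_eventuallyEq ?_).congr_deriv ?_
  · filter_upwards [isOpen_ne.mem_nhds hζ] with w hw
    rw [cpow_neg_mul_besselI_eq hw, Function.comp_apply]
  rw [besselI_eq_besselG, div_two_cpow, cpow_add _ _ two_ne_zero, cpow_one]
  simp only [Nat.reduceSub, pow_one, Nat.cast_ofNat]
  linear_combination -(besselG (ν + 1) (ζ ^ 2) / (2 ^ ν * 2)) * hpow

lemma hasDerivAt_cpow_mul_besselI {ζ : ℂ} (hζ : ζ ∈ slitPlane) (ν : ℂ) :
    HasDerivAt (fun ζ => ζ ^ ν * besselI ν ζ) (ζ ^ ν * besselI (ν - 1) ζ) ζ := by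
  have hζ0 : ζ ≠ 0 := slitPlane_ne_zero hζ
  have hG := (((hasDerivAt_id ζ).cpow_const (c := 2 * ν) hζ).mul
    ((hasDerivAt_besselG ν (ζ ^ 2)).comp ζ (hasDerivAt_pow 2 ζ))).div_const (2 ^ ν)
  have hpow : ζ ^ ν * ζ ^ (ν - 1) = ζ ^ (2 * ν - 1) := by rw [← cpow_add _ _ hζ0]; ring_nf
  have hpow' : ζ ^ (2 * ν) = ζ ^ (2 * ν - 1) * ζ := by
    simpa only [cpow_one, sub_add_cancel] using cpow_add (2 * ν - 1) 1 hζ0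
  have h2 : (2 : ℂ) ^ ν ≠ 0 := by simp [cpow_eq_zero_iff]
  refine (hG.congr_of_eventuallyEq ?_).congr_deriv ?_
  · filter_upwards [isOpen_ne.mem_nhds hζ0] with w hw
    rw [cpow_mul_besselI_eq hw]
    rfl
  rw [besselI_eq_besselG, besselG_sub_one, div_two_cpow, cpow_sub _ _ two_ne_zero, cpow_one]
  simp only [id, Function.comp_apply, Nat.reduceSub, pow_one, Nat.cast_ofNat, mul_one, hpow']
  field_simp
  linear_combination -(ν * besselG ν (ζ ^ 2) * 4 + ζ ^ 2 * besselG (ν + 1) (ζ ^ 2)) * hpow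

lemma besselK_neg (ν ζ : ℂ) : besselK (-ν) ζ = besselK ν ζ := by
  simp only [besselK, neg_neg, neg_mul, sin_neg, mul_neg, div_neg]
  ring

lemma hasDerivAt_cpow_mul_besselK {ζ : ℂ} (hζ : ζ ∈ slitPlane) (ν : ℂ) :
    HasDerivAt (fun ζ => ζ ^ ν * besselK ν ζ) (-(ζ ^ ν * besselK (ν - 1) ζ)) ζ := by
  have hI := hasDerivAt_cpow_neg_mul_besselI (slitPlane_ne_zero hζ) (-ν)
  simp only [neg_neg] at hI
  have hK := (hI.sub (hasDerivAt_cpow_mul_besselI hζ ν)).const_mul (π / (2 * sin (ν * π)))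
  refine (hK.congr_deriv ?_).congr_of_eventuallyEq (.of_forall fun w => ?_)
  · rw [besselK, sub_mul, one_mul, sin_sub_pi, neg_sub, neg_add_eq_sub, mul_neg, div_neg]
    ring
  · simp only [besselK, Pi.sub_apply]
    ring

lemma tendsto_cpow_mul_besselK_nhdsNE_zero {β : ℂ} (hβ : 0 < β.re) (hsin : sin (β * π) ≠ 0) :
    Tendsto (fun ζ => ζ ^ β * besselK β ζ) (𝓝[≠] 0) (𝓝 (2 ^ (β - 1) * Gamma β)) := by
  set F : ℂ → ℂ := fun ζ => π / (2 * sin (β * π)) *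
    (besselG (-β) (ζ ^ 2) / 2 ^ (-β) - ζ ^ (2 * β) * besselG β (ζ ^ 2) / 2 ^ β)
  have hF : ContinuousAt F 0 := by
    have := continuous_besselG β
    have := continuous_besselG (-β)
    have hpow : ContinuousAt (fun ζ : ℂ => ζ ^ (2 * β)) 0 :=
      continuousAt_cpow_const_of_re_pos (Or.inl le_rfl) (by simpa using hβ)
    fun_prop
  have hF0 : F 0 = 2 ^ (β - 1) * Gamma β := by
    have hβ0 : 2 * β ≠ 0 := by intro h; simp_all
    have hrefl := Gamma_mul_Gamma_one_sub β
    rw [mul_comm (π : ℂ) β] at hrefl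
    have hΓ : Gamma (1 - β) ≠ 0 := by
      intro h; rw [h, mul_zero, eq_comm, div_eq_zero_iff] at hrefl; simp_all
    rw [← eq_div_iff hΓ] at hrefl
    simp only [F, zero_pow two_ne_zero, zero_cpow hβ0, besselG_zero, zero_mul, zero_div, sub_zero,
      neg_add_eq_sub, cpow_neg, cpow_sub _ _ two_ne_zero, cpow_one, hrefl]
    field_simp
  rw [← hF0]
  refine (hF.tendsto.mono_left nhdsWithin_le_nhds).congr' ?_
  filter_upwards [self_mem_nhdsWithin] with ζ hζ
  have h1 := cpow_neg_mul_besselI_eq hζ (-β)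
  rw [neg_neg] at h1
  simp only [F, besselK]
  rw [← h1, ← cpow_mul_besselI_eq hζ]
  ring

noncomputable def besselU (β ζ : ℂ) : ℂ := ζ ^ β * besselK β ζ / (2 ^ (β - 1) * Gamma β)

lemma uGen_of_re_pos {β : ℂ} (hβ : 0 < β.re) (z l : ℂ) : uGen β z l = besselU β (l * z) :=
  if_pos hβ

lemma uGen_of_re_nonpos {β : ℂ} (hβ : β.re ≤ 0) (z l : ℂ) : uGen β z l = besselU (-β) (l * z) :=
  if_neg hβ.not_gt

lemma hasDerivAt_besselU {ζ : ℂ} (hζ : ζ ∈ slitPlane) {α : ℂ} (hΓ : Gamma (1 - α) ≠ 0) :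
    HasDerivAt (besselU α) (-(cConst α * ζ ^ (2 * α - 1) * besselU (1 - α) ζ)) ζ := by
  refine ((hasDerivAt_cpow_mul_besselK hζ α).div_const (2 ^ (α - 1) * Gamma α)).congr_deriv ?_
  have hζ0 := slitPlane_ne_zero hζ
  have hpow : ζ ^ α = ζ ^ (2 * α - 1) * ζ ^ (1 - α) := by rw [← cpow_add _ _ hζ0]; ring_nf
  have h2 : (2 : ℂ) ^ (2 * α - 1) = 2 ^ (α - 1) * 2 ^ α := by
    rw [← cpow_add _ _ two_ne_zero]; ring_nf
  rw [← besselK_neg, neg_sub, besselU, cConst, hpow, h2, sub_sub_cancel_left, cpow_neg]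
  have : (2 : ℂ) ^ α ≠ 0 := by simp [cpow_eq_zero_iff]
  field_simp

lemma sin_mul_pi_ne_zero {β : ℂ} (h0 : 0 < β.re) (h1 : β.re < 1) : sin (β * π) ≠ 0 := by
  intro h
  obtain ⟨k, hk⟩ := sin_eq_zero_iff.mp h
  have hβk : β.re = k := by
    rw [mul_right_cancel₀ (ofReal_ne_zero.mpr Real.pi_ne_zero) hk]; simp
  rw [hβk] at h0 h1
  have : (0 : ℤ) < k := by exact_mod_cast h0
  have : k < 1 := by exact_mod_cast h1
  omega

lemma tendsto_besselU_nhdsNE_zero {β : ℂ} (hβ : 0 < β.re) (hsin : sin (β * π) ≠ 0) :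
    Tendsto (besselU β) (𝓝[≠] 0) (𝓝 1) := by
  have hC : (2 : ℂ) ^ (β - 1) * Gamma β ≠ 0 :=
    mul_ne_zero (by simp [cpow_eq_zero_iff]) (Gamma_ne_zero_of_re_pos hβ)
  rw [← div_self hC]
  exact (tendsto_cpow_mul_besselK_nhdsNE_zero hβ hsin).div_const _

lemma ne_zero_of_mem_sector {θ : ℝ} {ζ : ℂ} (h : ζ ∈ sector θ) : ζ ≠ 0 := by
  unfold sector at h
  split_ifs at h
  · exact fun h0 => by simp [h0] at h
  · exact h.1

lemma abs_arg_le_of_mem_sector {θ : ℝ} {ζ : ℂ} (h : ζ ∈ sector θ) : |ζ.arg| ≤ θ := by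
  unfold sector at h
  split_ifs at h with hθ
  · simp [hθ, arg_eq_zero_iff.mpr ⟨h.1.le, h.2⟩]
  · exact h.2.le

lemma abs_arg_lt_of_mem_sector {θ : ℝ} (hθ : θ ≠ 0) {ζ : ℂ} (h : ζ ∈ sector θ) : |ζ.arg| < θ := by
  rw [sector, if_neg hθ] at h
  exact h.2

lemma abs_arg_add_arg_lt_of_mem_sector {ω : ℝ} {l z : ℂ} (hl : l ∈ sector ω)
    (hz : z ∈ sector (π / 2 - ω)) : |l.arg + z.arg| < π / 2 := by
  refine (abs_add_le _ _).trans_lt ?_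
  rcases eq_or_ne ω 0 with rfl | hω
  · linarith [abs_arg_le_of_mem_sector hl,
      abs_arg_lt_of_mem_sector (by simp [Real.pi_ne_zero]) hz]
  · linarith [abs_arg_lt_of_mem_sector hω hl, abs_arg_le_of_mem_sector hz]

lemma mul_cpow_of_arg_add_mem_Ioc {x y : ℂ} (hx : x ≠ 0) (hy : y ≠ 0)
    (h : x.arg + y.arg ∈ Ioc (-π) π) (c : ℂ) : (x * y) ^ c = x ^ c * y ^ c := by
  rw [cpow_def_of_ne_zero (mul_ne_zero hx hy), log_mul hx hy h, add_mul, exp_add,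
    cpow_def_of_ne_zero hx, cpow_def_of_ne_zero hy]

lemma mul_mem_slitPlane_of_abs_arg_add_lt {x y : ℂ} (hx : x ≠ 0) (hy : y ≠ 0)
    (h : |x.arg + y.arg| < π / 2) : x * y ∈ slitPlane := by
  obtain ⟨h1, h2⟩ := abs_lt.mp h
  rw [mem_slitPlane_iff_arg, arg_mul hx hy ⟨by linarith [Real.pi_pos], by linarith [Real.pi_pos]⟩]
  exact ⟨by linarith [Real.pi_pos], mul_ne_zero hx hy⟩

lemma cpow_one_sub_mul_mul_cpow_sub_one_mul {l z : ℂ} (hl : l ≠ 0) (hz : z ≠ 0)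
    (h : l.arg + z.arg ∈ Ioc (-π) π) (c : ℂ) : z ^ (1 - c) * ((l * z) ^ (c - 1) * l) = l ^ c := by
  have : z ^ c ≠ 0 := by simp [cpow_eq_zero_iff, hz]
  rw [mul_cpow_of_arg_add_mem_Ioc hl hz h, cpow_sub _ _ hz, cpow_sub _ _ hz, cpow_sub _ _ hl,
    cpow_one, cpow_one]
  field_simp

lemma hasDerivAt_uGen {α : ℂ} (hα : 0 < α.re) (hΓ : Gamma (1 - α) ≠ 0) {l z : ℂ}
    (hlz : l * z ∈ slitPlane) :
    HasDerivAt (fun w => uGen α w l)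
      (-(cConst α * (l * z) ^ (2 * α - 1) * besselU (1 - α) (l * z)) * l) z := by
  simp only [uGen_of_re_pos hα]
  exact ((hasDerivAt_besselU hlz hΓ).comp z ((hasDerivAt_id z).const_mul l)).congr_deriv
    (by rw [mul_one])

lemma neg_cpow_mul_deriv_uGen {α : ℂ} (hα1 : 0 < α.re) (hα2 : α.re < 1) {l z : ℂ} (hl : l ≠ 0)
    (hz : z ≠ 0) (harg : |l.arg + z.arg| < π / 2) :
    -z ^ (1 - 2 * α) * deriv (fun w => uGen α w l) z
      = cConst α * l ^ (2 * α) * besselU (1 - α) (l * z) := by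
  obtain ⟨h1, h2⟩ := abs_lt.mp harg
  rw [(hasDerivAt_uGen hα1 (Gamma_ne_zero_of_re_pos (by simpa using hα2))
      (mul_mem_slitPlane_of_abs_arg_add_lt hl hz harg)).deriv,
    ← cpow_one_sub_mul_mul_cpow_sub_one_mul hl hz
      ⟨by linarith [Real.pi_pos], by linarith [Real.pi_pos]⟩ (2 * α)]
  ring

theorem stmt3_general (α : ℂ) (hα1 : 0 < α.re) (hα2 : α.re < 1)
    (ω : ℝ)
    (l : ℂ) (hl : l ∈ sector ω) :
    (∀ z ∈ sector (Real.pi / 2 - ω),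
      -z ^ (1 - 2 * α) * deriv (fun w => uGen α w l) z
        = cConst α * l ^ (2 * α) * uGen (α - 1) z l) ∧
    Filter.Tendsto (fun z : ℂ => -z ^ (1 - 2 * α) * deriv (fun w => uGen α w l) z)
      (nhdsWithin 0 (sector (Real.pi / 2 - ω))) (nhds (cConst α * l ^ (2 * α))) := by
  have hl0 := ne_zero_of_mem_sector hl
  have huGen (z : ℂ) : uGen (α - 1) z l = besselU (1 - α) (l * z) := by
    rw [uGen_of_re_nonpos (by simpa using hα2.le), neg_sub]
  have hderiv (z : ℂ) (hz : z ∈ sector (π / 2 - ω)) :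
      -z ^ (1 - 2 * α) * deriv (fun w => uGen α w l) z
        = cConst α * l ^ (2 * α) * uGen (α - 1) z l := by
    rw [huGen, neg_cpow_mul_deriv_uGen hα1 hα2 hl0 (ne_zero_of_mem_sector hz)
      (abs_arg_add_arg_lt_of_mem_sector hl hz)]
  refine ⟨hderiv, ?_⟩
  have hlz : Tendsto (l * ·) (𝓝[sector (π / 2 - ω)] 0) (𝓝[≠] 0) :=
    tendsto_nhdsWithin_iff.mpr ⟨(continuous_const_mul l).tendsto' 0 0 (mul_zero l) |>.mono_left
      nhdsWithin_le_nhds, eventually_nhdsWithin_of_forall fun z hz =>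
        mul_ne_zero hl0 (ne_zero_of_mem_sector hz)⟩
  have hre : 0 < (1 - α).re := by simpa using hα2
  have hU := ((tendsto_besselU_nhdsNE_zero hre (sin_mul_pi_ne_zero hre (by simpa using hα1))).comp
    hlz).const_mul (cConst α * l ^ (2 * α))
  rw [mul_one] at hU
  refine hU.congr' (eventually_nhdsWithin_of_forall fun z hz => ?_)
  simp only [Function.comp_apply, hderiv z hz, huGen]

theorem stmt3 (α : ℂ) (hα1 : 0 < α.re) (hα2 : α.re < 1)
    (ω : ℝ) (hω : ω ∈ Set.Ico 0 (Real.pi / 2))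
    (l : ℂ) (hl : l ∈ sector ω) :
    (∀ z ∈ sector (Real.pi / 2 - ω),
      -z ^ (1 - 2 * α) * deriv (fun w => uGen α w l) z
        = cConst α * l ^ (2 * α) * uGen (α - 1) z l) ∧
    Filter.Tendsto (fun z : ℂ => -z ^ (1 - 2 * α) * deriv (fun w => uGen α w l) z)
      (nhdsWithin 0 (sector (Real.pi / 2 - ω))) (nhds (cConst α * l ^ (2 * α))) :=
  stmt3_general α hα1 hα2 ω l hl
end

section
/- Let X be a complex Banach space, A : X → X a bounded linear operator, α ∈ ℂ with 0 < Re α < 1, x, y ∈ X, and let u ∈ C([0,∞); X) ∩ C²((0,∞); X) satisfy u''(t) + ((1−2α)/t) u'(t) = A u(t) for all t > 0, u(0) = x, and t^{1−2α} u'(t) → y as t → 0+. Then for every t > 0 one has the integral equation u(t) = x + (t^{2α}/(2α)) y + (2α)^{−1} ∫_0^t (t^{2α} − s^{2α}) s^{1−2α} A u(s) ds, where the integral is a convergent Bochner integral and complex powers of positive reals are principal-branch. -/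
/-!
Multiplying the equation by `t ^ (1 - 2α)` turns it into `(t ^ (1 - 2α) u')' = t ^ (1 - 2α) A u`,
so integrating from `0` gives `t ^ (1 - 2α) u' t = y + ∫₀ᵗ s ^ (1 - 2α) A u s ds`. The right-hand
side of the claimed identity has derivative `t ^ (2α - 1)` times this, that is `u' t`, and tends
to `x` as `t → 0⁺`, as `u` does. The condition `0 < Re α < 1` is what makes `s ^ (1 - 2α)`
integrable at `0` and `t ^ (2α)` vanish there.
-/

open Complex Filter Set MeasureTheory Topology

section

variable {E : Type*} [NormedAddCommGroup E] [NormedSpace ℂ E]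

lemma hasDerivAt_ofReal_cpow_const_of_pos {c : ℂ} {t : ℝ} (ht : 0 < t) :
    HasDerivAt (fun r : ℝ => (r : ℂ) ^ c) (c * (t : ℂ) ^ (c - 1)) t :=
  (hasStrictDerivAt_cpow_const (ofReal_mem_slitPlane.2 ht)).hasDerivAt.comp_ofReal

lemma continuousOn_ofReal_cpow_smul {c : ℂ} {f : ℝ → E} (hf : ContinuousOn f (Ioi 0)) :
    ContinuousOn (fun s : ℝ => (s : ℂ) ^ c • f s) (Ioi 0) := fun _s hs =>
  (continuousAt_ofReal_cpow_const _ _ (Or.inr (ne_of_gt hs))).continuousWithinAt.smul (hf _ hs)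

lemma integrableOn_ofReal_cpow_smul {c : ℂ} (hc : -1 < c.re) {f : ℝ → E} {t : ℝ}
    (hf : ContinuousOn f (Icc 0 t)) :
    IntegrableOn (fun s : ℝ => (s : ℂ) ^ c • f s) (Ioc 0 t) :=
  (intervalIntegral.intervalIntegrable_cpow' hc).1.smul_continuousOn_of_subset hf
    measurableSet_Ioc isCompact_Icc Ioc_subset_Icc_self

lemma tendsto_integral_nhdsGT_left {f : ℝ → E} {a b : ℝ} (hab : a < b)
    (hf : IntegrableOn f (Ioc a b)) :
    Tendsto (fun r => ∫ s in a..r, f s) (𝓝[>] a) (𝓝 0) := by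
  have hcont : ContinuousWithinAt (fun r => ∫ s in a..r, f s) (Icc a b) a :=
    intervalIntegral.continuousWithinAt_primitive (measure_singleton a) (by
      rwa [min_self, max_eq_right hab.le, intervalIntegrable_iff_integrableOn_Ioc_of_le hab.le])
  simpa using (hcont.mono_of_mem_nhdsWithin (Icc_mem_nhdsGT hab)).tendsto

lemma hasDerivAt_integral_zero_right [CompleteSpace E] {f : ℝ → E} {t : ℝ} (ht : 0 < t)
    (hf : ContinuousOn f (Ioi 0)) (hint : IntegrableOn f (Ioc 0 t)) :
    HasDerivAt (fun r => ∫ s in (0 : ℝ)..r, f s) (f t) t :=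
  intervalIntegral.integral_hasDerivAt_right
    ((intervalIntegrable_iff_integrableOn_Ioc_of_le ht.le).2 hint)
    (hf.stronglyMeasurableAtFilter isOpen_Ioi t ht) (hf.continuousAt (Ioi_mem_nhds ht))

lemma eq_add_integral_of_hasDerivAt_of_tendsto_nhdsGT [CompleteSpace E] {F F' : ℝ → E}
    {a b : ℝ} {c : E} (hab : a < b) (hF : ∀ s ∈ Ioc a b, HasDerivAt F (F' s) s)
    (hF' : IntegrableOn F' (Ioc a b)) (hc : Tendsto F (𝓝[>] a) (𝓝 c)) :
    F b = c + ∫ s in a..b, F' s := by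
  rw [intervalIntegral.integral_eq_sub_of_hasDerivAt_of_tendsto hab
    (fun s hs => hF s (Ioo_subset_Ioc_self hs))
    ((intervalIntegrable_iff_integrableOn_Ioc_of_le hab.le).2 hF') hc
    ((hF b (right_mem_Ioc.2 hab)).continuousAt.tendsto.mono_left nhdsWithin_le_nhds),
    add_sub_cancel]

section SingularODE

variable {β : ℂ} {h u u' u'' : ℝ → E} {y : E}

lemma neg_one_lt_re_one_sub (hβ : β.re < 2) : -1 < (1 - β).re := by
  rw [sub_re, one_re]
  linarith

lemma hasDerivAt_cpow_smul_deriv_of_ode {t : ℝ} (ht : 0 < t) (hu'' : HasDerivAt u' (u'' t) t)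
    (hode : u'' t + ((1 - β) / (t : ℂ)) • u' t = h t) :
    HasDerivAt (fun r : ℝ => (r : ℂ) ^ (1 - β) • u' r) ((t : ℂ) ^ (1 - β) • h t) t := by
  refine ((hasDerivAt_ofReal_cpow_const_of_pos ht).smul hu'').congr_deriv ?_
  have hcoeff : (1 - β) * (t : ℂ) ^ (1 - β - 1) = (t : ℂ) ^ (1 - β) * ((1 - β) / t) := by
    rw [cpow_sub _ _ (ofReal_ne_zero.2 ht.ne'), cpow_one]
    ring
  rw [hcoeff, mul_smul, ← smul_add, hode]

lemma integrableOn_ofReal_cpow_smul_smul (hβ0 : 0 < β.re) (hβ2 : β.re < 2)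
    (hh : ContinuousOn h (Ici 0)) (t : ℝ) :
    IntegrableOn (fun s : ℝ => (s : ℂ) ^ β • (s : ℂ) ^ (1 - β) • h s) (Ioc 0 t) :=
  (integrableOn_ofReal_cpow_smul (neg_one_lt_re_one_sub hβ2)
    (hh.mono Icc_subset_Ici_self)).continuousOn_smul_of_subset
    (continuous_ofReal_cpow_const hβ0).continuousOn isCompact_Icc measurableSet_Ioc
    Ioc_subset_Icc_self

lemma integrableOn_cpow_sub_cpow_mul_cpow_smul (hβ0 : 0 < β.re) (hβ2 : β.re < 2)
    (hh : ContinuousOn h (Ici 0)) (t : ℝ) :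
    IntegrableOn (fun s : ℝ => (((t : ℂ) ^ β - (s : ℂ) ^ β) * (s : ℂ) ^ (1 - β)) • h s)
      (Ioc 0 t) := by
  simp_rw [sub_mul, sub_smul, mul_smul]
  exact ((integrableOn_ofReal_cpow_smul (neg_one_lt_re_one_sub hβ2)
    (hh.mono Icc_subset_Ici_self)).smul ((t : ℂ) ^ β)).sub
    (integrableOn_ofReal_cpow_smul_smul hβ0 hβ2 hh t)

lemma setIntegral_cpow_sub_cpow_mul_cpow_smul (hβ0 : 0 < β.re) (hβ2 : β.re < 2)
    (hh : ContinuousOn h (Ici 0)) {t : ℝ} (ht : 0 ≤ t) :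
    ∫ s in Ioc 0 t, (((t : ℂ) ^ β - (s : ℂ) ^ β) * (s : ℂ) ^ (1 - β)) • h s =
      (t : ℂ) ^ β • (∫ s in (0 : ℝ)..t, (s : ℂ) ^ (1 - β) • h s) -
        ∫ s in (0 : ℝ)..t, (s : ℂ) ^ β • (s : ℂ) ^ (1 - β) • h s := by
  simp_rw [sub_mul, sub_smul, mul_smul]
  rw [integral_sub (f := fun s : ℝ => (t : ℂ) ^ β • (s : ℂ) ^ (1 - β) • h s)
      ((integrableOn_ofReal_cpow_smul (neg_one_lt_re_one_sub hβ2)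
        (hh.mono Icc_subset_Ici_self)).smul ((t : ℂ) ^ β))
      (integrableOn_ofReal_cpow_smul_smul hβ0 hβ2 hh t),
    integral_smul, intervalIntegral.integral_of_le ht, intervalIntegral.integral_of_le ht]

variable [CompleteSpace E]

lemma cpow_smul_deriv_eq_add_integral (hβ : β.re < 2) (hh : ContinuousOn h (Ici 0))
    (hu'' : ∀ t ∈ Ioi (0 : ℝ), HasDerivAt u' (u'' t) t)
    (hode : ∀ t ∈ Ioi (0 : ℝ), u'' t + ((1 - β) / (t : ℂ)) • u' t = h t)
    (hy : Tendsto (fun t : ℝ => (t : ℂ) ^ (1 - β) • u' t) (𝓝[>] 0) (𝓝 y)) {t : ℝ} (ht : 0 < t) :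
    (t : ℂ) ^ (1 - β) • u' t = y + ∫ s in (0 : ℝ)..t, (s : ℂ) ^ (1 - β) • h s :=
  eq_add_integral_of_hasDerivAt_of_tendsto_nhdsGT ht
    (fun s hs => hasDerivAt_cpow_smul_deriv_of_ode hs.1 (hu'' s hs.1) (hode s hs.1))
    (integrableOn_ofReal_cpow_smul (neg_one_lt_re_one_sub hβ) (hh.mono Icc_subset_Ici_self)) hy

lemma hasDerivAt_solution_formula (hβ0 : 0 < β.re) (hβ2 : β.re < 2)
    (hh : ContinuousOn h (Ici 0)) {t : ℝ} (ht : 0 < t) :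
    HasDerivAt (fun r : ℝ => β⁻¹ • ((r : ℂ) ^ β • (y + ∫ s in (0 : ℝ)..r, (s : ℂ) ^ (1 - β) • h s)
        - ∫ s in (0 : ℝ)..r, (s : ℂ) ^ β • (s : ℂ) ^ (1 - β) • h s))
      ((t : ℂ) ^ (β - 1) • (y + ∫ s in (0 : ℝ)..t, (s : ℂ) ^ (1 - β) • h s)) t := by
  have hh' : ContinuousOn h (Ioi 0) := hh.mono Ioi_subset_Ici_self
  have hI₁ := hasDerivAt_integral_zero_right ht (continuousOn_ofReal_cpow_smul hh')
    (integrableOn_ofReal_cpow_smul (neg_one_lt_re_one_sub hβ2) (hh.mono Icc_subset_Ici_self))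
  have hI₂ := hasDerivAt_integral_zero_right ht
    (continuousOn_ofReal_cpow_smul (c := β) (continuousOn_ofReal_cpow_smul hh'))
    (integrableOn_ofReal_cpow_smul_smul hβ0 hβ2 hh t)
  refine ((((hasDerivAt_ofReal_cpow_const_of_pos ht).smul
    ((hasDerivAt_const t y).add hI₁)).sub hI₂).const_smul β⁻¹).congr_deriv ?_
  have hβ : β ≠ 0 := fun hβ' => by simp [hβ'] at hβ0
  rw [zero_add, add_sub_cancel_left, smul_smul, inv_mul_cancel_left₀ hβ]
  rfl

theorem eq_add_integral_of_singular_ode (hβ0 : 0 < β.re) (hβ2 : β.re < 2)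
    (hu : ContinuousOn u (Ici 0)) (hu' : ∀ t ∈ Ioi (0 : ℝ), HasDerivAt u (u' t) t)
    (hu'' : ∀ t ∈ Ioi (0 : ℝ), HasDerivAt u' (u'' t) t) (hh : ContinuousOn h (Ici 0))
    (hode : ∀ t ∈ Ioi (0 : ℝ), u'' t + ((1 - β) / (t : ℂ)) • u' t = h t)
    (hy : Tendsto (fun t : ℝ => (t : ℂ) ^ (1 - β) • u' t) (𝓝[>] 0) (𝓝 y)) {t : ℝ} (ht : 0 < t) :
    u t = u 0 + ((t : ℂ) ^ β / β) • y +
      β⁻¹ • ∫ s in Ioc 0 t, (((t : ℂ) ^ β - (s : ℂ) ^ β) * (s : ℂ) ^ (1 - β)) • h s := by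
  set I₁ : ℝ → E := fun r => ∫ s in (0 : ℝ)..r, (s : ℂ) ^ (1 - β) • h s
  set I₂ : ℝ → E := fun r => ∫ s in (0 : ℝ)..r, (s : ℂ) ^ β • (s : ℂ) ^ (1 - β) • h s
  set g : ℝ → E := fun r => β⁻¹ • ((r : ℂ) ^ β • (y + I₁ r) - I₂ r)
  have hderiv : ∀ s ∈ Ioc 0 t, HasDerivAt (fun r => u r - g r) 0 s := by
    intro s hs
    have hu's : u' s = (s : ℂ) ^ (β - 1) • (y + I₁ s) := by
      have hexp : β - 1 + (1 - β) = 0 := by ring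
      rw [← cpow_smul_deriv_eq_add_integral hβ2 hh hu'' hode hy hs.1, smul_smul,
        ← cpow_add _ _ (ofReal_ne_zero.2 hs.1.ne'), hexp, cpow_zero, one_smul]
    have := (hu' s hs.1).sub (hasDerivAt_solution_formula (y := y) hβ0 hβ2 hh hs.1)
    rwa [← hu's, sub_self] at this
  have hlim : Tendsto (fun r => u r - g r) (𝓝[>] 0) (𝓝 (u 0)) := by
    have hcpow : Tendsto (fun r : ℝ => (r : ℂ) ^ β) (𝓝[>] 0) (𝓝 0) := by
      simpa [zero_cpow (fun hβ' => by simp [hβ'] at hβ0 : β ≠ 0)] using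
        ((continuous_ofReal_cpow_const hβ0).tendsto 0).mono_left nhdsWithin_le_nhds
    have hI₁ := tendsto_integral_nhdsGT_left one_pos
      (integrableOn_ofReal_cpow_smul (neg_one_lt_re_one_sub hβ2) (hh.mono Icc_subset_Ici_self))
    have hI₂ := tendsto_integral_nhdsGT_left one_pos
      (integrableOn_ofReal_cpow_smul_smul hβ0 hβ2 hh 1)
    have hu0 := (hu 0 self_mem_Ici).tendsto.mono_left (nhdsWithin_mono _ Ioi_subset_Ici_self)
    convert hu0.sub (((hcpow.smul ((tendsto_const_nhds (x := y)).add hI₁)).sub hI₂).const_smul β⁻¹)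
      using 2
    simp
  have hut := eq_add_integral_of_hasDerivAt_of_tendsto_nhdsGT ht hderiv integrableOn_zero hlim
  rw [intervalIntegral.integral_zero, add_zero, sub_eq_iff_eq_add'] at hut
  rw [hut, setIntegral_cpow_sub_cpow_mul_cpow_smul hβ0 hβ2 hh ht.le]
  simp only [g]
  module

end SingularODE

end

theorem stmt13_general {X : Type*} [NormedAddCommGroup X] [NormedSpace ℂ X] [CompleteSpace X]
    (A : X →L[ℂ] X) (α : ℂ) (hα1 : 0 < α.re) (hα2 : α.re < 1)
    (x y : X) (u u' u'' : ℝ → X)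
    (hu_cont : ContinuousOn u (Set.Ici 0))
    (hu' : ∀ t ∈ Set.Ioi (0 : ℝ), HasDerivAt u (u' t) t)
    (hu'' : ∀ t ∈ Set.Ioi (0 : ℝ), HasDerivAt u' (u'' t) t)
    (hODE : ∀ t ∈ Set.Ioi (0 : ℝ), u'' t + ((1 - 2 * α) / (t : ℂ)) • u' t = A (u t))
    (hx : u 0 = x)
    (hy : Filter.Tendsto (fun t : ℝ => ((t : ℂ) ^ (1 - 2 * α)) • u' t)
      (nhdsWithin 0 (Set.Ioi 0)) (nhds y)) :
    ∀ t ∈ Set.Ioi (0 : ℝ),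
      MeasureTheory.IntegrableOn
        (fun s : ℝ => (((t : ℂ) ^ (2 * α) - (s : ℂ) ^ (2 * α)) * (s : ℂ) ^ (1 - 2 * α)) • A (u s))
        (Set.Ioc 0 t) ∧
      u t = x + ((t : ℂ) ^ (2 * α) / (2 * α)) • y +
        ((2 * α)⁻¹ : ℂ) • ∫ s in Set.Ioc (0 : ℝ) t,
          (((t : ℂ) ^ (2 * α) - (s : ℂ) ^ (2 * α)) * (s : ℂ) ^ (1 - 2 * α)) • A (u s) := by
  intro t ht
  have hre : (2 * α).re = 2 * α.re := by simp
  have hβ0 : 0 < (2 * α).re := by linarith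
  have hβ2 : (2 * α).re < 2 := by linarith
  have hAu : ContinuousOn (fun s => A (u s)) (Ici 0) := A.continuous.comp_continuousOn hu_cont
  refine ⟨integrableOn_cpow_sub_cpow_mul_cpow_smul hβ0 hβ2 hAu t, ?_⟩
  rw [← hx]
  exact eq_add_integral_of_singular_ode hβ0 hβ2 hu_cont hu' hu'' hAu hODE hy ht

theorem stmt13 {X : Type*} [NormedAddCommGroup X] [NormedSpace ℂ X] [CompleteSpace X]
    (A : X →L[ℂ] X) (α : ℂ) (hα1 : 0 < α.re) (hα2 : α.re < 1)
    (x y : X) (u u' u'' : ℝ → X)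
    (hu_cont : ContinuousOn u (Set.Ici 0))
    (hu' : ∀ t ∈ Set.Ioi (0 : ℝ), HasDerivAt u (u' t) t)
    (hu'' : ∀ t ∈ Set.Ioi (0 : ℝ), HasDerivAt u' (u'' t) t)
    (hu''_cont : ContinuousOn u'' (Set.Ioi 0))
    (hODE : ∀ t ∈ Set.Ioi (0 : ℝ), u'' t + ((1 - 2 * α) / (t : ℂ)) • u' t = A (u t))
    (hx : u 0 = x)
    (hy : Filter.Tendsto (fun t : ℝ => ((t : ℂ) ^ (1 - 2 * α)) • u' t)
      (nhdsWithin 0 (Set.Ioi 0)) (nhds y)) :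
    ∀ t ∈ Set.Ioi (0 : ℝ),
      MeasureTheory.IntegrableOn
        (fun s : ℝ => (((t : ℂ) ^ (2 * α) - (s : ℂ) ^ (2 * α)) * (s : ℂ) ^ (1 - 2 * α)) • A (u s))
        (Set.Ioc 0 t) ∧
      u t = x + ((t : ℂ) ^ (2 * α) / (2 * α)) • y +
        ((2 * α)⁻¹ : ℂ) • ∫ s in Set.Ioc (0 : ℝ) t,
          (((t : ℂ) ^ (2 * α) - (s : ℂ) ^ (2 * α)) * (s : ℂ) ^ (1 - 2 * α)) • A (u s) :=
  stmt13_general A α hα1 hα2 x y u u' u'' hu_cont hu' hu'' hODE hx hy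
end

section
/- Let X be a complex Banach space, A : X → X a bounded linear operator, and α ∈ ℂ with 0 < Re α < 1. Then for any x, y ∈ X there is at most one function u ∈ C([0,∞); X) ∩ C²((0,∞); X) with u''(t) + ((1−2α)/t) u'(t) = A u(t) for all t > 0, u(0) = x, and t^{1−2α} u'(t) → y as t → 0+. Equivalently, if such a u satisfies x = 0 and y = 0, then u = 0. -/
/-!
Let `w` be the difference of two solutions and `β = 1 - 2α`, `a = Re β ∈ (-1, 1)`. The equation
says `(t^β w')' = t^β A w`, and `t^β w' → 0` at `0`, so `t^β w'(t) = ∫₀ᵗ s^β A w(s) ds`. With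
`φ(t) = ∫₀ᵗ s^a ‖w(s)‖ ds` (finite because `a > -1`) this gives `‖w'(t)‖ ≤ ‖A‖ t^(-a) φ(t)`, and
integrating once more from `w(0) = 0` (possible because `a < 1`) gives
`‖w(t)‖ ≤ ‖A‖ t^(1-a) φ(t) / (1 - a)`. Hence `φ' ≤ K t φ` with `φ(0) = 0`, and Gronwall's
inequality forces `φ = 0`, hence `w = 0`.
-/

open Complex Filter Set MeasureTheory intervalIntegral Topology

theorem le_mul_exp_sub_of_hasDerivAt_le_mul {φ φ' ψ ψ' : ℝ → ℝ} {a b : ℝ} (hab : a ≤ b)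
    (hφ : ContinuousOn φ (Icc a b)) (hψ : ContinuousOn ψ (Icc a b))
    (hφ' : ∀ s ∈ Ioo a b, HasDerivAt φ (φ' s) s) (hψ' : ∀ s ∈ Ioo a b, HasDerivAt ψ (ψ' s) s)
    (hle : ∀ s ∈ Ioo a b, φ' s ≤ ψ' s * φ s) :
    φ b ≤ φ a * Real.exp (ψ b - ψ a) := by
  have hanti : AntitoneOn (fun r => φ r * Real.exp (-ψ r)) (Icc a b) := by
    refine antitoneOn_of_hasDerivWithinAt_nonpos
      (f' := fun s => φ' s * Real.exp (-ψ s) + φ s * (Real.exp (-ψ s) * -ψ' s))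
      (convex_Icc a b) (hφ.mul hψ.neg.rexp) (fun s hs => ?_) (fun s hs => ?_)
    all_goals rw [interior_Icc] at hs
    · exact ((hφ' s hs).mul (hψ' s hs).neg.exp).hasDerivWithinAt
    · have := mul_le_mul_of_nonneg_right (hle s hs) (Real.exp_pos (-ψ s)).le
      linarith
  have hba := hanti (left_mem_Icc.2 hab) (right_mem_Icc.2 hab) hab
  calc φ b = φ b * Real.exp (-ψ b) * Real.exp (ψ b) := by
        rw [mul_assoc, ← Real.exp_add, neg_add_cancel, Real.exp_zero, mul_one]
    _ ≤ φ a * Real.exp (-ψ a) * Real.exp (ψ b) := by gcongr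
    _ = φ a * Real.exp (ψ b - ψ a) := by
        rw [mul_assoc, ← Real.exp_add, neg_add_eq_sub]

section IntervalIntegrable

variable {E F : Type*} [NormedAddCommGroup E] [NormedAddCommGroup F]

theorem intervalIntegrable_of_norm_le_mul_rpow {f : ℝ → E} {t r M : ℝ} (ht : 0 ≤ t)
    (hr : -1 < r) (hf : ContinuousOn f (Ioc 0 t)) (hle : ∀ s ∈ Ioc 0 t, ‖f s‖ ≤ M * s ^ r) :
    IntervalIntegrable f volume 0 t := by
  rw [intervalIntegrable_iff_integrableOn_Ioc_of_le ht]
  refine Integrable.mono' ((intervalIntegrable_iff_integrableOn_Ioc_of_le ht).1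
    ((intervalIntegrable_rpow' hr).const_mul M)) (hf.aestronglyMeasurable measurableSet_Ioc) ?_
  filter_upwards [ae_restrict_mem measurableSet_Ioc] with s hs
  exact hle s hs

theorem intervalIntegrable_of_norm_le_rpow_mul {f : ℝ → E} {v : ℝ → F} {t r : ℝ} (ht : 0 ≤ t)
    (hr : -1 < r) (hf : ContinuousOn f (Ioc 0 t)) (hv : ContinuousOn v (Icc 0 t))
    (hle : ∀ s ∈ Ioc 0 t, ‖f s‖ ≤ s ^ r * ‖v s‖) : IntervalIntegrable f volume 0 t := by
  obtain ⟨M, hM⟩ := isCompact_Icc.exists_bound_of_continuousOn hv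
  refine intervalIntegrable_of_norm_le_mul_rpow (M := M) ht hr hf fun s hs => ?_
  calc ‖f s‖ ≤ s ^ r * ‖v s‖ := hle s hs
    _ ≤ s ^ r * M :=
        mul_le_mul_of_nonneg_left (hM s (Ioc_subset_Icc_self hs)) (Real.rpow_nonneg hs.1.le r)
    _ = M * s ^ r := mul_comm _ _

end IntervalIntegrable

theorem hasDerivAt_ofReal_cpow_smul {X : Type*} [NormedAddCommGroup X] [NormedSpace ℂ X]
    {f : ℝ → X} {f' : X} (β : ℂ) {t : ℝ} (ht : 0 < t) (hf : HasDerivAt f f' t) :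
    HasDerivAt (fun s : ℝ => (s : ℂ) ^ β • f s) ((t : ℂ) ^ β • (f' + (β / t) • f t)) t := by
  have htC : (t : ℂ) ≠ 0 := ofReal_ne_zero.2 ht.ne'
  have hpow : HasDerivAt (fun s : ℝ => (s : ℂ) ^ β) (β * (t : ℂ) ^ (β - 1)) t := by
    simpa using
      ((hasDerivAt_id (t : ℂ)).cpow_const (c := β) (ofReal_mem_slitPlane.2 ht)).comp_ofReal
  refine (hpow.smul hf).congr_deriv ?_
  rw [cpow_sub _ _ htC, cpow_one, smul_add, smul_smul]
  congr 2
  ring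

section WeightedNormIntegral

variable {E : Type*} [NormedAddCommGroup E] {w : ℝ → E} {a t : ℝ}

noncomputable def weightedNormIntegral (a : ℝ) (w : ℝ → E) (t : ℝ) : ℝ :=
  ∫ s in 0..t, s ^ a * ‖w s‖

theorem continuousOn_rpow_mul_norm (hw : ContinuousOn w (Ici 0)) :
    ContinuousOn (fun s => s ^ a * ‖w s‖) (Ioi 0) :=
  (continuousOn_id.rpow_const fun _ hs => Or.inl (ne_of_gt hs)).mul
    (hw.mono Ioi_subset_Ici_self).norm

theorem intervalIntegrable_rpow_mul_norm (hw : ContinuousOn w (Ici 0)) (ha : -1 < a)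
    (ht : 0 ≤ t) : IntervalIntegrable (fun s => s ^ a * ‖w s‖) volume 0 t :=
  intervalIntegrable_of_norm_le_rpow_mul ht ha
    ((continuousOn_rpow_mul_norm hw).mono Ioc_subset_Ioi_self) (hw.mono Icc_subset_Ici_self)
    fun s hs => by rw [norm_mul, norm_norm, Real.norm_of_nonneg (Real.rpow_nonneg hs.1.le a)]

theorem hasDerivAt_weightedNormIntegral (hw : ContinuousOn w (Ici 0)) (ha : -1 < a)
    (ht : 0 < t) : HasDerivAt (weightedNormIntegral a w) (t ^ a * ‖w t‖) t :=
  integral_hasDerivAt_right (intervalIntegrable_rpow_mul_norm hw ha ht.le)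
    ((continuousOn_rpow_mul_norm hw).stronglyMeasurableAtFilter isOpen_Ioi t ht)
    ((continuousOn_rpow_mul_norm hw).continuousAt (Ioi_mem_nhds ht))

theorem continuousOn_weightedNormIntegral (hw : ContinuousOn w (Ici 0)) (ha : -1 < a)
    (ht : 0 ≤ t) : ContinuousOn (weightedNormIntegral a w) (Icc 0 t) := by
  rw [← uIcc_of_le ht]
  exact continuousOn_primitive_interval' (intervalIntegrable_rpow_mul_norm hw ha ht) left_mem_uIcc

theorem monotoneOn_weightedNormIntegral (hw : ContinuousOn w (Ici 0)) (ha : -1 < a) :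
    MonotoneOn (weightedNormIntegral a w) (Ici 0) := fun _ hs _ _ hst =>
  integral_mono_interval le_rfl hs hst
    (ae_restrict_of_forall_mem measurableSet_Ioc fun _ hr =>
      mul_nonneg (Real.rpow_nonneg hr.1.le a) (norm_nonneg _))
    (intervalIntegrable_rpow_mul_norm hw ha (le_trans hs hst))

end WeightedNormIntegral

section SingularCauchyProblem

variable {X : Type*} [NormedAddCommGroup X] [NormedSpace ℂ X] [CompleteSpace X]
  {A : X →L[ℂ] X} {β : ℂ} {w w' w'' : ℝ → X} {t : ℝ}

theorem cpow_smul_deriv_eq_integral (hβ : -1 < β.re) (hw : ContinuousOn w (Ici 0))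
    (hw'' : ∀ s ∈ Ioi (0 : ℝ), HasDerivAt w' (w'' s) s)
    (hode : ∀ s ∈ Ioi (0 : ℝ), w'' s + (β / s) • w' s = A (w s))
    (hlim : Tendsto (fun s : ℝ => (s : ℂ) ^ β • w' s) (𝓝[>] 0) (𝓝 0)) (ht : 0 < t) :
    (t : ℂ) ^ β • w' t = ∫ s in 0..t, (s : ℂ) ^ β • A (w s) := by
  have hderiv : ∀ s ∈ Ioi (0 : ℝ),
      HasDerivAt (fun r : ℝ => (r : ℂ) ^ β • w' r) ((s : ℂ) ^ β • A (w s)) s := fun s hs => by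
    simpa only [hode s hs] using hasDerivAt_ofReal_cpow_smul β hs (hw'' s hs)
  have hAw : ContinuousOn (fun s => A (w s)) (Icc 0 t) :=
    (A.continuous.comp_continuousOn hw).mono Icc_subset_Ici_self
  have hint : IntervalIntegrable (fun s : ℝ => (s : ℂ) ^ β • A (w s)) volume 0 t :=
    intervalIntegrable_of_norm_le_rpow_mul ht.le hβ
      (fun s hs => (continuousAt_ofReal_cpow_const s β (Or.inr hs.1.ne')).continuousWithinAt.smul
        ((hAw s (Ioc_subset_Icc_self hs)).mono Ioc_subset_Icc_self)) hAw
      fun s hs => by rw [norm_smul, norm_cpow_eq_rpow_re_of_pos hs.1]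
  rw [integral_eq_sub_of_hasDerivAt_of_tendsto ht (fun s hs => hderiv s hs.1) hint hlim
    ((hderiv t ht).continuousAt.tendsto.mono_left nhdsWithin_le_nhds), sub_zero]

theorem norm_deriv_le_mul_weightedNormIntegral (hβ : -1 < β.re) (hw : ContinuousOn w (Ici 0))
    (hw'' : ∀ s ∈ Ioi (0 : ℝ), HasDerivAt w' (w'' s) s)
    (hode : ∀ s ∈ Ioi (0 : ℝ), w'' s + (β / s) • w' s = A (w s))
    (hlim : Tendsto (fun s : ℝ => (s : ℂ) ^ β • w' s) (𝓝[>] 0) (𝓝 0)) (ht : 0 < t) :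
    ‖w' t‖ ≤ ‖A‖ * weightedNormIntegral β.re w t * t ^ (-β.re) := by
  have hpointwise : ∀ s ∈ Ioc (0 : ℝ) t,
      ‖(s : ℂ) ^ β • A (w s)‖ ≤ ‖A‖ * (s ^ β.re * ‖w s‖) := fun s hs =>
    calc ‖(s : ℂ) ^ β • A (w s)‖ = s ^ β.re * ‖A (w s)‖ := by
          rw [norm_smul, norm_cpow_eq_rpow_re_of_pos hs.1]
      _ ≤ s ^ β.re * (‖A‖ * ‖w s‖) :=
          mul_le_mul_of_nonneg_left (A.le_opNorm _) (Real.rpow_nonneg hs.1.le _)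
      _ = ‖A‖ * (s ^ β.re * ‖w s‖) := mul_left_comm _ _ _
  have hbound : t ^ β.re * ‖w' t‖ ≤ ‖A‖ * weightedNormIntegral β.re w t :=
    calc t ^ β.re * ‖w' t‖ = ‖∫ s in 0..t, (s : ℂ) ^ β • A (w s)‖ := by
          rw [← cpow_smul_deriv_eq_integral hβ hw hw'' hode hlim ht, norm_smul,
            norm_cpow_eq_rpow_re_of_pos ht]
      _ ≤ ∫ s in 0..t, ‖A‖ * (s ^ β.re * ‖w s‖) :=
          norm_integral_le_of_norm_le ht.le (ae_of_all _ hpointwise)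
            ((intervalIntegrable_rpow_mul_norm hw hβ ht.le).const_mul _)
      _ = ‖A‖ * weightedNormIntegral β.re w t := integral_const_mul _ _
  rwa [Real.rpow_neg ht.le, ← div_eq_mul_inv, le_div_iff₀ (Real.rpow_pos_of_pos ht _), mul_comm]

theorem norm_le_mul_weightedNormIntegral (hβ₁ : -1 < β.re) (hβ₂ : β.re < 1)
    (hw : ContinuousOn w (Ici 0)) (hw' : ∀ s ∈ Ioi (0 : ℝ), HasDerivAt w (w' s) s)
    (hw'' : ∀ s ∈ Ioi (0 : ℝ), HasDerivAt w' (w'' s) s)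
    (hode : ∀ s ∈ Ioi (0 : ℝ), w'' s + (β / s) • w' s = A (w s)) (hw0 : w 0 = 0)
    (hlim : Tendsto (fun s : ℝ => (s : ℂ) ^ β • w' s) (𝓝[>] 0) (𝓝 0)) (ht : 0 < t) :
    ‖w t‖ ≤ ‖A‖ / (1 - β.re) * t ^ (1 - β.re) * weightedNormIntegral β.re w t := by
  set a := β.re
  set φ := weightedNormIntegral a w
  have hra : -1 < -a := by linarith
  have hbound : ∀ s ∈ Ioc 0 t, ‖w' s‖ ≤ ‖A‖ * φ t * s ^ (-a) := fun s hs =>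
    (norm_deriv_le_mul_weightedNormIntegral hβ₁ hw hw'' hode hlim hs.1).trans <|
      mul_le_mul_of_nonneg_right (mul_le_mul_of_nonneg_left
        (monotoneOn_weightedNormIntegral hw hβ₁ hs.1.le ht.le hs.2) (norm_nonneg A))
        (Real.rpow_nonneg hs.1.le _)
  have hint : IntervalIntegrable w' volume 0 t := intervalIntegrable_of_norm_le_mul_rpow ht.le hra
    (fun s hs => (hw'' s hs.1).continuousAt.continuousWithinAt) hbound
  have hw0lim : Tendsto w (𝓝[>] 0) (𝓝 0) :=
    hw0 ▸ (hw 0 self_mem_Ici).tendsto.mono_left (nhdsWithin_mono _ Ioi_subset_Ici_self)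
  have hw_eq : w t = ∫ s in 0..t, w' s := by
    rw [integral_eq_sub_of_hasDerivAt_of_tendsto ht (fun s hs => hw' s hs.1) hint hw0lim
      ((hw' t ht).continuousAt.tendsto.mono_left nhdsWithin_le_nhds), sub_zero]
  calc ‖w t‖ ≤ ∫ s in 0..t, ‖A‖ * φ t * s ^ (-a) := by
        rw [hw_eq]
        exact norm_integral_le_of_norm_le ht.le (ae_of_all _ hbound)
          ((intervalIntegrable_rpow' hra).const_mul _)
    _ = ‖A‖ * φ t * (t ^ (1 - a) / (1 - a)) := by
        rw [intervalIntegral.integral_const_mul, integral_rpow (Or.inl hra), neg_add_eq_sub,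
          Real.zero_rpow (by linarith), sub_zero]
    _ = ‖A‖ / (1 - a) * t ^ (1 - a) * φ t := by ring

theorem eqOn_zero_of_cpow_smul_deriv_tendsto_zero (hβ₁ : -1 < β.re) (hβ₂ : β.re < 1)
    (hw : ContinuousOn w (Ici 0)) (hw' : ∀ s ∈ Ioi (0 : ℝ), HasDerivAt w (w' s) s)
    (hw'' : ∀ s ∈ Ioi (0 : ℝ), HasDerivAt w' (w'' s) s)
    (hode : ∀ s ∈ Ioi (0 : ℝ), w'' s + (β / s) • w' s = A (w s)) (hw0 : w 0 = 0)
    (hlim : Tendsto (fun s : ℝ => (s : ℂ) ^ β • w' s) (𝓝[>] 0) (𝓝 0)) :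
    EqOn w 0 (Ici 0) := by
  intro t ht
  rcases (mem_Ici.1 ht).eq_or_lt with rfl | ht
  · exact hw0
  set a := β.re
  set φ := weightedNormIntegral a w
  set K := ‖A‖ / (1 - a)
  have hK : 0 ≤ K * t ^ (1 - a) :=
    mul_nonneg (div_nonneg (norm_nonneg A) (by linarith)) (Real.rpow_nonneg ht.le _)
  have hgrowth : ∀ s ∈ Ioo 0 t, s ^ a * ‖w s‖ ≤ K * s * φ s := fun s hs => by
    have hpow : s ^ a * s ^ (1 - a) = s := by
      rw [← Real.rpow_add hs.1, add_sub_cancel, Real.rpow_one]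
    calc s ^ a * ‖w s‖ ≤ s ^ a * (K * s ^ (1 - a) * φ s) :=
          mul_le_mul_of_nonneg_left (norm_le_mul_weightedNormIntegral hβ₁ hβ₂ hw hw' hw'' hode
            hw0 hlim hs.1) (Real.rpow_nonneg hs.1.le _)
      _ = K * s * φ s := by linear_combination K * φ s * hpow
  have hφ : φ t ≤ 0 := by
    have h := le_mul_exp_sub_of_hasDerivAt_le_mul (ψ := fun s => K * s ^ 2 / 2)
      (ψ' := fun s => K * s) ht.le (continuousOn_weightedNormIntegral hw hβ₁ ht.le)
      (by fun_prop) (fun s hs => hasDerivAt_weightedNormIntegral hw hβ₁ hs.1)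
      (fun s _ => (((hasDerivAt_pow 2 s).const_mul K).div_const 2).congr_deriv (by ring))
      hgrowth
    simpa [φ, weightedNormIntegral] using h
  exact norm_le_zero_iff.1 <| (norm_le_mul_weightedNormIntegral hβ₁ hβ₂ hw hw' hw'' hode hw0
    hlim ht).trans (mul_nonpos_of_nonneg_of_nonpos hK hφ)

end SingularCauchyProblem

theorem stmt15_general {X : Type*} [NormedAddCommGroup X] [NormedSpace ℂ X] [CompleteSpace X]
    (A : X →L[ℂ] X) (α : ℂ) (hα1 : 0 < α.re) (hα2 : α.re < 1)
    (x y : X) (u₁ u₁' u₁'' u₂ u₂' u₂'' : ℝ → X)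
    (h₁_cont : ContinuousOn u₁ (Set.Ici 0))
    (h₁' : ∀ t ∈ Set.Ioi (0 : ℝ), HasDerivAt u₁ (u₁' t) t)
    (h₁'' : ∀ t ∈ Set.Ioi (0 : ℝ), HasDerivAt u₁' (u₁'' t) t)
    (h₁ODE : ∀ t ∈ Set.Ioi (0 : ℝ), u₁'' t + ((1 - 2 * α) / (t : ℂ)) • u₁' t = A (u₁ t))
    (h₁x : u₁ 0 = x)
    (h₁y : Filter.Tendsto (fun t : ℝ => ((t : ℂ) ^ (1 - 2 * α)) • u₁' t)
      (nhdsWithin 0 (Set.Ioi 0)) (nhds y))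
    (h₂_cont : ContinuousOn u₂ (Set.Ici 0))
    (h₂' : ∀ t ∈ Set.Ioi (0 : ℝ), HasDerivAt u₂ (u₂' t) t)
    (h₂'' : ∀ t ∈ Set.Ioi (0 : ℝ), HasDerivAt u₂' (u₂'' t) t)
    (h₂ODE : ∀ t ∈ Set.Ioi (0 : ℝ), u₂'' t + ((1 - 2 * α) / (t : ℂ)) • u₂' t = A (u₂ t))
    (h₂x : u₂ 0 = x)
    (h₂y : Filter.Tendsto (fun t : ℝ => ((t : ℂ) ^ (1 - 2 * α)) • u₂' t)
      (nhdsWithin 0 (Set.Ioi 0)) (nhds y)) :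
    Set.EqOn u₁ u₂ (Set.Ici 0) := by
  have hre : (1 - 2 * α).re = 1 - 2 * α.re := by simp
  have hdiff := eqOn_zero_of_cpow_smul_deriv_tendsto_zero (A := A)
    (by rw [hre]; linarith) (by rw [hre]; linarith) (h₁_cont.sub h₂_cont)
    (fun t ht => (h₁' t ht).sub (h₂' t ht)) (fun t ht => (h₁'' t ht).sub (h₂'' t ht))
    (fun t ht => by
      rw [Pi.sub_apply, map_sub, ← h₁ODE t ht, ← h₂ODE t ht, smul_sub]; abel)
    (by rw [Pi.sub_apply, h₁x, h₂x, sub_self])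
    (by simpa only [smul_sub, sub_self] using h₁y.sub h₂y)
  exact fun t ht => sub_eq_zero.1 (hdiff ht)

theorem stmt15 {X : Type*} [NormedAddCommGroup X] [NormedSpace ℂ X] [CompleteSpace X]
    (A : X →L[ℂ] X) (α : ℂ) (hα1 : 0 < α.re) (hα2 : α.re < 1)
    (x y : X) (u₁ u₁' u₁'' u₂ u₂' u₂'' : ℝ → X)
    (h₁_cont : ContinuousOn u₁ (Set.Ici 0))
    (h₁' : ∀ t ∈ Set.Ioi (0 : ℝ), HasDerivAt u₁ (u₁' t) t)
    (h₁'' : ∀ t ∈ Set.Ioi (0 : ℝ), HasDerivAt u₁' (u₁'' t) t)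
    (h₁''_cont : ContinuousOn u₁'' (Set.Ioi 0))
    (h₁ODE : ∀ t ∈ Set.Ioi (0 : ℝ), u₁'' t + ((1 - 2 * α) / (t : ℂ)) • u₁' t = A (u₁ t))
    (h₁x : u₁ 0 = x)
    (h₁y : Filter.Tendsto (fun t : ℝ => ((t : ℂ) ^ (1 - 2 * α)) • u₁' t)
      (nhdsWithin 0 (Set.Ioi 0)) (nhds y))
    (h₂_cont : ContinuousOn u₂ (Set.Ici 0))
    (h₂' : ∀ t ∈ Set.Ioi (0 : ℝ), HasDerivAt u₂ (u₂' t) t)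
    (h₂'' : ∀ t ∈ Set.Ioi (0 : ℝ), HasDerivAt u₂' (u₂'' t) t)
    (h₂''_cont : ContinuousOn u₂'' (Set.Ioi 0))
    (h₂ODE : ∀ t ∈ Set.Ioi (0 : ℝ), u₂'' t + ((1 - 2 * α) / (t : ℂ)) • u₂' t = A (u₂ t))
    (h₂x : u₂ 0 = x)
    (h₂y : Filter.Tendsto (fun t : ℝ => ((t : ℂ) ^ (1 - 2 * α)) • u₂' t)
      (nhdsWithin 0 (Set.Ioi 0)) (nhds y)) :
    Set.EqOn u₁ u₂ (Set.Ici 0) :=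
  stmt15_general A α hα1 hα2 x y u₁ u₁' u₁'' u₂ u₂' u₂'' h₁_cont h₁' h₁'' h₁ODE h₁x h₁y h₂_cont h₂'
    h₂'' h₂ODE h₂x h₂y
end
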